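/- arXiv:1105.1650 — 6 statements merged into one kernel-verified Lean document; each statement's English description precedes it below -/
import Mathlib

section
/- Let e_s and e_u be unit vectors in a 2-dimensional real inner product space T with angle α ∈ (0, π) between them, and let s, u > √2. Define C : ℝ² → T by C(e₁) = s⁻¹ e_s and C(e₂) = u⁻¹ e_u, where e₁, e₂ is the standard basis. Then C is a contraction: ‖C(ξ, η)‖ ≤ ‖(ξ, η)‖ for all ξ, η ∈ ℝ. -/
open RealInnerProductSpace


set_option maxHeartbeats 1000000 in
/-- Let `e_s, e_u` be unit vectors in a 2-dimensional real inner product space `T` with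
angle `α ∈ (0, π)` between them, and let `s, u > √2`. The linear map `C : ℝ² → T` with
`C e₁ = s⁻¹ e_s` and `C e₂ = u⁻¹ e_u` is a contraction: `‖C (ξ, η)‖ ≤ ‖(ξ, η)‖`. -/
theorem lyapunov_change_of_coordinates_contraction
    {T : Type*} [NormedAddCommGroup T] [InnerProductSpace ℝ T]
    (hdim : Module.finrank ℝ T = 2)
    (e_s e_u : T) (hes : ‖e_s‖ = 1) (heu : ‖e_u‖ = 1)
    (α : ℝ) (hα : InnerProductGeometry.angle e_s e_u = α) (hα' : α ∈ Set.Ioo 0 Real.pi)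
    (s u : ℝ) (hs : Real.sqrt 2 < s) (hu : Real.sqrt 2 < u) :
    ∀ ξ η : ℝ, ‖ξ • s⁻¹ • e_s + η • u⁻¹ • e_u‖ ≤ Real.sqrt (ξ ^ 2 + η ^ 2) := by
  intro ξ η
  have h20 : (0:ℝ) ≤ Real.sqrt 2 := Real.sqrt_nonneg 2
  have hsq2 : Real.sqrt 2 ^ 2 = 2 := Real.sq_sqrt (by norm_num)
  have hs0 : 0 < s := lt_of_le_of_lt h20 hs
  have hu0 : 0 < u := lt_of_le_of_lt h20 hu
  have hs2 : 2 < s ^ 2 := by nlinarith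
  have hu2 : 2 < u ^ 2 := by nlinarith
  have hsu : 2 < s * u := by nlinarith
  have hinner : |⟪e_s, e_u⟫| ≤ 1 := by
    have := abs_real_inner_le_norm e_s e_u
    rw [hes, heu] at this; simpa using this
  have hinner1 : ⟪e_s, e_u⟫ ≤ 1 := (abs_le.mp hinner).2
  have hinner2 : -1 ≤ ⟪e_s, e_u⟫ := (abs_le.mp hinner).1
  rw [Real.le_sqrt (norm_nonneg _) (by positivity)]
  have hv : ‖ξ • s⁻¹ • e_s + η • u⁻¹ • e_u‖ ^ 2
      = (ξ * s⁻¹) ^ 2 + 2 * (ξ * s⁻¹) * (η * u⁻¹) * ⟪e_s, e_u⟫ + (η * u⁻¹) ^ 2 := by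
    have h1 : ⟪e_s, e_s⟫ = 1 := by
      rw [real_inner_self_eq_norm_sq, hes]; norm_num
    have h2 : ⟪e_u, e_u⟫ = 1 := by
      rw [real_inner_self_eq_norm_sq, heu]; norm_num
    rw [← real_inner_self_eq_norm_sq]
    simp only [inner_add_add_self, real_inner_smul_left, real_inner_smul_right,
      real_inner_comm e_u e_s, h1, h2]
    ring
  rw [hv]
  have hes2 : (ξ * s⁻¹) ^ 2 ≤ ξ ^ 2 / 2 := by
    rw [mul_pow, div_eq_mul_inv]
    apply mul_le_mul_of_nonneg_left _ (by positivity)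
    rw [inv_pow]
    exact inv_anti₀ (by norm_num) hs2.le
  have heu2 : (η * u⁻¹) ^ 2 ≤ η ^ 2 / 2 := by
    rw [mul_pow, div_eq_mul_inv]
    apply mul_le_mul_of_nonneg_left _ (by positivity)
    rw [inv_pow]
    exact inv_anti₀ (by norm_num) hu2.le
  have hcross : 2 * (ξ * s⁻¹) * (η * u⁻¹) * ⟪e_s, e_u⟫ ≤ (ξ ^ 2 + η ^ 2) / 2 := by
    have e1 : 2 * (ξ * s⁻¹) * (η * u⁻¹) * ⟪e_s, e_u⟫
        ≤ |2 * (ξ * s⁻¹) * (η * u⁻¹)| * |⟪e_s, e_u⟫| := by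
      rw [← abs_mul]; exact le_abs_self _
    have e2 : |2 * (ξ * s⁻¹) * (η * u⁻¹)| * |⟪e_s, e_u⟫|
        ≤ |2 * (ξ * s⁻¹) * (η * u⁻¹)| := by
      nlinarith [abs_nonneg (2 * (ξ * s⁻¹) * (η * u⁻¹)), abs_nonneg (⟪e_s, e_u⟫ : ℝ)]
    have e3 : |2 * (ξ * s⁻¹) * (η * u⁻¹)| = 2 * (|ξ| * |η|) * (s * u)⁻¹ := by
      rw [abs_mul, abs_mul, abs_mul, abs_mul, abs_inv, abs_inv,
        abs_of_pos hs0, abs_of_pos hu0, mul_inv]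
      norm_num; ring
    have e4 : (s * u)⁻¹ ≤ 2⁻¹ := inv_anti₀ (by norm_num) hsu.le
    have e5 : 2 * (|ξ| * |η|) * (s * u)⁻¹ ≤ |ξ| * |η| := by
      nlinarith [mul_nonneg (abs_nonneg ξ) (abs_nonneg η)]
    have e6 : |ξ| * |η| ≤ (ξ ^ 2 + η ^ 2) / 2 := by
      nlinarith [sq_nonneg (|ξ| - |η|), sq_abs ξ, sq_abs η]
    linarith
  linarith
end

section
/- Let ε > 0 and let I_ε = {e^{-ℓε/3} : ℓ ∈ ℕ}. Let (Q_k)_{k∈ℤ} be a sequence in I_ε, and suppose (q_k)_{k∈ℤ} is a sequence in I_ε with 0 < q_k ≤ Q_k and e^{-ε} ≤ q_k/q_{k+1} ≤ e^{ε} for all k. Then there exists a sequence of pairs (p_k^u, p_k^s)_{k∈ℤ} that is ε-subordinated to (Q_k) and satisfies min(p_k^u, p_k^s) ≥ q_k for all k. -/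
/-- `I_ε = {e^{-ℓε/3} : ℓ ∈ ℕ}`. -/
def Ieps (ε : ℝ) : Set ℝ := {x | ∃ ℓ : ℕ, x = Real.exp (-(ℓ * ε) / 3)}

/-- A sequence of pairs `(p_k^u, p_k^s)` is ε-subordinated to `(Q_k)` if for every `k`:
`0 < p_k^u, p_k^s ≤ Q_k`, both belong to `I_ε`, and
`p_{k+1}^u = min (e^ε p_k^u) Q_{k+1}`, `p_{k-1}^s = min (e^ε p_k^s) Q_{k-1}`. -/
def Subordinated (ε : ℝ) (Q pu ps : ℤ → ℝ) : Prop :=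
  ∀ k : ℤ, 0 < pu k ∧ 0 < ps k ∧ pu k ≤ Q k ∧ ps k ≤ Q k ∧
    pu k ∈ Ieps ε ∧ ps k ∈ Ieps ε ∧
    pu (k + 1) = min (Real.exp ε * pu k) (Q (k + 1)) ∧
    ps (k - 1) = min (Real.exp ε * ps k) (Q (k - 1))

/-- Given `(Q_k)` in `I_ε` and `(q_k)` in `I_ε` with `0 < q_k ≤ Q_k` and
`e^{-ε} ≤ q_k / q_{k+1} ≤ e^ε`, there is an ε-subordinated sequence `(p_k^u, p_k^s)`
with `min (p_k^u) (p_k^s) ≥ q_k` for all `k`. -/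
theorem exists_subordinated (ε : ℝ) (hε : 0 < ε) (Q q : ℤ → ℝ)
    (hQ : ∀ k, Q k ∈ Ieps ε)
    (hq : ∀ k, q k ∈ Ieps ε) (hqpos : ∀ k, 0 < q k) (hqQ : ∀ k, q k ≤ Q k)
    (hratio : ∀ k, Real.exp (-ε) ≤ q k / q (k + 1) ∧ q k / q (k + 1) ≤ Real.exp ε) :
    ∃ pu ps : ℤ → ℝ, Subordinated ε Q pu ps ∧ ∀ k, q k ≤ min (pu k) (ps k) := by
  classical
  choose L hL using hQ
  choose M hM using hq
  set E : ℤ → ℝ := fun a => Real.exp (ε * a / 3) with hEdef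
  have hEmono : Monotone E := by
    intro a b hab
    exact Real.exp_le_exp.mpr (by
      apply div_le_div_of_nonneg_right _ (by norm_num)
      exact mul_le_mul_of_nonneg_left (by exact_mod_cast hab) hε.le)
  have hEle : ∀ a b : ℤ, E a ≤ E b ↔ a ≤ b := by
    intro a b
    constructor
    · intro h
      by_contra hc
      push_neg at hc
      have : E b < E a := by
        apply Real.exp_lt_exp.mpr
        apply div_lt_div_of_pos_right _ (by norm_num)
        exact mul_lt_mul_of_pos_left (by exact_mod_cast hc) hε
      linarith
    · exact fun h => hEmono h
  have hQE : ∀ k, Q k = E (-(L k : ℤ)) := by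
    intro k; rw [hL k, hEdef]; simp only []; congr 1; push_cast; ring
  have hqE : ∀ k, q k = E (-(M k : ℤ)) := by
    intro k; rw [hM k, hEdef]; simp only []; congr 1; push_cast; ring
  have hLM : ∀ k, (L k : ℤ) ≤ (M k : ℤ) := by
    intro k
    have := hqQ k
    rw [hqE k, hQE k, hEle] at this
    omega
  -- ratio condition in integer form
  have hM3 : ∀ k, (M (k + 1) : ℤ) ≤ M k + 3 ∧ (M k : ℤ) ≤ M (k + 1) + 3 := by
    intro k
    have hdiv : q k / q (k + 1) = Real.exp (ε * ((M (k+1) : ℤ) - (M k : ℤ)) / 3) := by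
      rw [hqE k, hqE (k+1), hEdef]
      simp only []
      rw [← Real.exp_sub]
      congr 1
      push_cast; ring
    obtain ⟨h1, h2⟩ := hratio k
    rw [hdiv] at h1 h2
    have h2' : ε * ((M (k+1) : ℤ) - (M k : ℤ)) / 3 ≤ ε := Real.exp_le_exp.mp h2
    have h1' : -ε ≤ ε * ((M (k+1) : ℤ) - (M k : ℤ)) / 3 := Real.exp_le_exp.mp h1
    constructor
    · have h3 : ((M (k+1) : ℕ) : ℝ) ≤ ((M k : ℕ) : ℝ) + 3 := by
        push_cast at h2'; nlinarith
      exact_mod_cast h3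
    · have h3 : ((M k : ℕ) : ℝ) ≤ ((M (k+1) : ℕ) : ℝ) + 3 := by
        push_cast at h1'; nlinarith
      exact_mod_cast h3
  have hMd : ∀ k : ℤ, ∀ n : ℕ, (M (k - n) : ℤ) ≤ M k + 3 * n := by
    intro k n
    induction n with
    | zero => simp
    | succ n ih =>
      have := (hM3 (k - (n+1 : ℕ))).2
      have he : k - (n+1 : ℕ) + 1 = k - n := by push_cast; ring
      rw [he] at this
      push_cast at *
      omega
  have hMu : ∀ k : ℤ, ∀ n : ℕ, (M (k + n) : ℤ) ≤ M k + 3 * n := by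
    intro k n
    induction n with
    | zero => simp
    | succ n ih =>
      have := (hM3 (k + n)).1
      have he : k + n + 1 = k + (n+1 : ℕ) := by push_cast; ring
      rw [he] at this
      push_cast at *
      omega
  -- the infima
  set fu : ℤ → ℕ → ℤ := fun k n => 3 * n - L (k - n) with hfu
  set fs : ℤ → ℕ → ℤ := fun k n => 3 * n - L (k + n) with hfs
  have hfu_lb : ∀ k n, -(M k : ℤ) ≤ fu k n := by
    intro k n
    have h1 := hLM (k - n)
    have h2 := hMd k n
    simp only [hfu]
    omega
  have hfs_lb : ∀ k n, -(M k : ℤ) ≤ fs k n := by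
    intro k n
    have h1 := hLM (k + n)
    have h2 := hMu k n
    simp only [hfs]
    omega
  have hbddu : ∀ k, BddBelow (Set.range (fu k)) := by
    intro k
    exact ⟨-(M k : ℤ), by rintro x ⟨n, rfl⟩; exact hfu_lb k n⟩
  have hbdds : ∀ k, BddBelow (Set.range (fs k)) := by
    intro k
    exact ⟨-(M k : ℤ), by rintro x ⟨n, rfl⟩; exact hfs_lb k n⟩
  set gu : ℤ → ℤ := fun k => sInf (Set.range (fu k)) with hgu
  set gs : ℤ → ℤ := fun k => sInf (Set.range (fs k)) with hgs
  have hgu_mem : ∀ k, gu k ∈ Set.range (fu k) := fun k =>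
    Int.csInf_mem (Set.range_nonempty _) (hbddu k)
  have hgs_mem : ∀ k, gs k ∈ Set.range (fs k) := fun k =>
    Int.csInf_mem (Set.range_nonempty _) (hbdds k)
  have hgu_le : ∀ k n, gu k ≤ fu k n := fun k n =>
    csInf_le (hbddu k) ⟨n, rfl⟩
  have hgs_le : ∀ k n, gs k ≤ fs k n := fun k n =>
    csInf_le (hbdds k) ⟨n, rfl⟩
  have hgu_lb : ∀ k, -(M k : ℤ) ≤ gu k := by
    intro k
    apply le_csInf (Set.range_nonempty _)
    rintro x ⟨n, rfl⟩; exact hfu_lb k n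
  have hgs_lb : ∀ k, -(M k : ℤ) ≤ gs k := by
    intro k
    apply le_csInf (Set.range_nonempty _)
    rintro x ⟨n, rfl⟩; exact hfs_lb k n
  have hfu0 : ∀ k, fu k 0 = -(L k : ℤ) := by
    intro k; simp [hfu]
  have hfs0 : ∀ k, fs k 0 = -(L k : ℤ) := by
    intro k; simp [hfs]
  have hfu_succ : ∀ k n, fu (k + 1) (n + 1) = 3 + fu k n := by
    intro k n
    simp only [hfu]
    have : k + 1 - ((n : ℤ) + 1) = k - n := by ring
    push_cast
    rw [this]
    ring
  have hfs_succ : ∀ k n, fs (k - 1) (n + 1) = 3 + fs k n := by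
    intro k n
    simp only [hfs]
    have : k - 1 + ((n : ℤ) + 1) = k + n := by ring
    push_cast
    rw [this]
    ring
  -- recurrences
  have hgu_rec : ∀ k, gu (k + 1) = min (3 + gu k) (-(L (k + 1) : ℤ)) := by
    intro k
    apply le_antisymm
    · apply le_min
      · obtain ⟨n0, hn0⟩ := hgu_mem k
        calc gu (k + 1) ≤ fu (k + 1) (n0 + 1) := hgu_le _ _
          _ = 3 + fu k n0 := hfu_succ k n0
          _ = 3 + gu k := by rw [hn0]
      · rw [← hfu0 (k + 1)]; exact hgu_le _ 0
    · apply le_csInf (Set.range_nonempty _)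
      rintro x ⟨n, rfl⟩
      cases n with
      | zero => rw [hfu0]; exact min_le_right _ _
      | succ n =>
        refine le_trans (min_le_left _ _) ?_
        rw [hfu_succ]
        have := hgu_le k n
        omega
  have hgs_rec : ∀ k, gs (k - 1) = min (3 + gs k) (-(L (k - 1) : ℤ)) := by
    intro k
    apply le_antisymm
    · apply le_min
      · obtain ⟨n0, hn0⟩ := hgs_mem k
        calc gs (k - 1) ≤ fs (k - 1) (n0 + 1) := hgs_le _ _
          _ = 3 + fs k n0 := hfs_succ k n0
          _ = 3 + gs k := by rw [hn0]
      · rw [← hfs0 (k - 1)]; exact hgs_le _ 0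
    · apply le_csInf (Set.range_nonempty _)
      rintro x ⟨n, rfl⟩
      cases n with
      | zero => rw [hfs0]; exact min_le_right _ _
      | succ n =>
        refine le_trans (min_le_left _ _) ?_
        rw [hfs_succ]
        have := hgs_le k n
        omega
  have hE3 : ∀ a : ℤ, E (3 + a) = Real.exp ε * E a := by
    intro a
    rw [hEdef]
    simp only []
    rw [← Real.exp_add]
    congr 1
    push_cast
    ring
  have hEmin : ∀ a b : ℤ, E (min a b) = min (E a) (E b) := by
    intro a b
    exact hEmono.map_min
  have hEIeps : ∀ a : ℤ, a ≤ 0 → E a ∈ Ieps ε := by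
    intro a ha
    refine ⟨(-a).toNat, ?_⟩
    rw [hEdef]
    simp only []
    congr 1
    have : ((-a).toNat : ℝ) = -(a : ℝ) := by
      exact_mod_cast congrArg (Int.cast : ℤ → ℝ) (Int.toNat_of_nonneg (by omega))
    rw [this]
    ring
  refine ⟨fun k => E (gu k), fun k => E (gs k), ?_, ?_⟩
  · intro k
    have hguL : gu k ≤ -(L k : ℤ) := by rw [← hfu0 k]; exact hgu_le k 0
    have hgsL : gs k ≤ -(L k : ℤ) := by rw [← hfs0 k]; exact hgs_le k 0
    refine ⟨Real.exp_pos _, Real.exp_pos _, ?_, ?_, ?_, ?_, ?_, ?_⟩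
    · rw [hQE k]; exact hEmono hguL
    · rw [hQE k]; exact hEmono hgsL
    · exact hEIeps _ (by omega)
    · exact hEIeps _ (by omega)
    · show E (gu (k + 1)) = min (Real.exp ε * E (gu k)) (Q (k + 1))
      rw [hgu_rec k, hEmin, hE3, hQE (k + 1)]
    · show E (gs (k - 1)) = min (Real.exp ε * E (gs k)) (Q (k - 1))
      rw [hgs_rec k, hEmin, hE3, hQE (k - 1)]
  · intro k
    rw [hqE k]
    exact le_min (hEmono (hgu_lb k)) (hEmono (hgs_lb k))
end

section
/- Let ε > 0, I_ε = {e^{-ℓε/3} : ℓ ∈ ℕ}, and suppose (p_n^u, p_n^s)_{n∈ℤ} is ε-subordinated to a sequence (Q_n)_{n∈ℤ} ⊂ I_ε. If limsup_{n→+∞} min(p_n^u, p_n^s) > 0 and limsup_{n→−∞} min(p_n^u, p_n^s) > 0, then p_n^u = Q_n for infinitely many n > 0 and for infinitely many n < 0, and similarly p_n^s = Q_n for infinitely many n > 0 and for infinitely many n < 0. -/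
lemma Ieps_le_one {ε : ℝ} (hε : 0 < ε) {x : ℝ} (hx : x ∈ Ieps ε) : x ≤ 1 := by
  obtain ⟨ℓ, rfl⟩ := hx
  rw [show (1 : ℝ) = Real.exp 0 by simp]
  apply Real.exp_le_exp.2
  have : (0 : ℝ) ≤ (ℓ : ℝ) * ε := by positivity
  linarith

/-- Forward growth for a forward recurrence, when the min is never the `Q` side. -/
lemma growth_fwd {ε : ℝ} (f Q' : ℤ → ℝ)
    (hrec : ∀ k : ℤ, f (k + 1) = min (Real.exp ε * f k) (Q' (k + 1)))
    (N : ℤ) (h : ∀ n : ℤ, N ≤ n → f n ≠ Q' n) :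
    ∀ m : ℕ, f (N + m) = Real.exp (ε * m) * f N := by
  intro m
  induction m with
  | zero => simp
  | succ m ih =>
    have hrw : (N + (↑(m + 1) : ℤ)) = (N + m) + 1 := by push_cast; ring
    have h1 := hrec (N + m)
    have hne : f ((N + m) + 1) ≠ Q' ((N + m) + 1) := by
      apply h
      have : (0 : ℤ) ≤ m := Int.ofNat_nonneg m
      omega
    have h2 : f ((N + m) + 1) = Real.exp ε * f (N + m) := by
      rcases min_cases (Real.exp ε * f (N + m)) (Q' (N + m + 1)) with ⟨he, _⟩ | ⟨he, _⟩
      · rw [h1, he]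
      · exact absurd (h1.trans he) hne
    rw [hrw, h2, ih, ← mul_assoc, ← Real.exp_add]
    push_cast
    ring_nf

/-- Backward decay for a forward recurrence, when the min is never the `Q` side. -/
lemma decay_bwd {ε : ℝ} (f Q' : ℤ → ℝ)
    (hrec : ∀ k : ℤ, f (k + 1) = min (Real.exp ε * f k) (Q' (k + 1)))
    (N : ℤ) (h : ∀ n : ℤ, n ≤ N → f n ≠ Q' n) :
    ∀ m : ℕ, f (N - m) = Real.exp (-(ε * m)) * f N := by
  intro m
  induction m with
  | zero => simp
  | succ m ih =>
    have h1 := hrec (N - (m + 1 : ℕ))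
    have hrw : (N - (↑(m + 1) : ℤ)) + 1 = N - m := by push_cast; ring
    rw [hrw] at h1
    have hne : f (N - m) ≠ Q' (N - m) := by
      apply h
      have : (0 : ℤ) ≤ m := Int.ofNat_nonneg m
      omega
    have h2 : f (N - m) = Real.exp ε * f (N - (m + 1 : ℕ)) := by
      rcases min_cases (Real.exp ε * f (N - (m + 1 : ℕ))) (Q' (N - m)) with ⟨he, _⟩ | ⟨he, _⟩
      · rw [h1, he]
      · exact absurd (h1.trans he) hne
    have hexp : Real.exp ε ≠ 0 := Real.exp_ne_zero ε
    have heq := ih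
    rw [h2] at heq
    have key : Real.exp (-(ε * (m : ℝ))) = Real.exp ε * Real.exp (-(ε * ((m + 1 : ℕ) : ℝ))) := by
      rw [← Real.exp_add]; congr 1; push_cast; ring
    rw [key, mul_assoc] at heq
    exact mul_left_cancel₀ hexp heq

/-- If `(p_n^u, p_n^s)` is ε-subordinated to `(Q_n) ⊂ I_ε` and
`limsup_{n→±∞} min(p_n^u, p_n^s) > 0`, then `p_n^u = Q_n` (resp. `p_n^s = Q_n`)
for infinitely many `n > 0` and infinitely many `n < 0`. -/
theorem subordinated_frequently_eq (ε : ℝ) (hε : 0 < ε) (Q pu ps : ℤ → ℝ)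
    (hQ : ∀ n, Q n ∈ Ieps ε)
    (hsub : Subordinated ε Q pu ps)
    (htop : 0 < Filter.limsup (fun n : ℤ => min (pu n) (ps n)) Filter.atTop)
    (hbot : 0 < Filter.limsup (fun n : ℤ => min (pu n) (ps n)) Filter.atBot) :
    ((∃ᶠ n : ℤ in Filter.atTop, pu n = Q n) ∧ (∃ᶠ n : ℤ in Filter.atBot, pu n = Q n)) ∧
      ((∃ᶠ n : ℤ in Filter.atTop, ps n = Q n) ∧ (∃ᶠ n : ℤ in Filter.atBot, ps n = Q n)) := by
  have hexp1 : 1 < Real.exp ε := by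
    rw [show (1 : ℝ) = Real.exp 0 by simp]
    exact Real.exp_lt_exp.2 hε
  -- the reversed sequence for ps satisfies the forward recurrence
  have hpsrec : ∀ k : ℤ, ps (-(k + 1)) = min (Real.exp ε * ps (-k)) (Q (-(k + 1))) := by
    intro k
    have := (hsub (-k)).2.2.2.2.2.2.2
    have hrw : (-k) - 1 = -(k + 1) := by ring
    rwa [hrw] at this
  have hpurec : ∀ k : ℤ, pu (k + 1) = min (Real.exp ε * pu k) (Q (k + 1)) :=
    fun k => (hsub k).2.2.2.2.2.2.1
  -- generic "unbounded growth" contradiction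
  have unbounded : ∀ (f : ℤ → ℝ) (N : ℤ), 0 < f N →
      (∀ m : ℕ, f (N + m) = Real.exp (ε * m) * f N) →
      (∀ n : ℤ, f n ≤ 1) → False := by
    intro f N hpos hgrow hle
    obtain ⟨m, hm⟩ := ((tendsto_pow_atTop_atTop_of_one_lt hexp1).eventually_gt_atTop
      (1 / f N)).exists
    have h1 : 1 < (Real.exp ε) ^ m * f N := (div_lt_iff₀ hpos).1 hm
    have h2 : (Real.exp ε) ^ m = Real.exp (ε * m) := by
      rw [← Real.exp_nat_mul]; ring_nf
    have h3 := hgrow m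
    have h4 : f (N + m) ≤ 1 := hle _
    rw [h3, ← h2] at h4
    linarith
  -- generic "decay to zero" fact: tendsto of the dominating exponential
  have expdecay : ∀ (N : ℤ) (c : ℝ),
      Filter.Tendsto (fun n : ℤ => Real.exp (ε * ((n : ℝ) - N)) * c)
        Filter.atBot (nhds 0) := by
    intro N c
    have h1 : Filter.Tendsto (fun n : ℤ => ε * ((n : ℝ) - N)) Filter.atBot Filter.atBot := by
      apply Filter.Tendsto.const_mul_atBot hε
      have hcast : Filter.Tendsto (fun n : ℤ => (n : ℝ)) Filter.atBot Filter.atBot :=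
        tendsto_intCast_atBot_iff.2 Filter.tendsto_id
      simpa [sub_eq_add_neg] using Filter.tendsto_atBot_add_const_right _ (-(N : ℝ)) hcast
    have h2 := (Real.tendsto_exp_atBot.comp h1).mul_const c
    simpa using h2
  -- part 1 : pu, atTop
  have part1 : ∃ᶠ n : ℤ in Filter.atTop, pu n = Q n := by
    by_contra hc
    rw [Filter.not_frequently] at hc
    obtain ⟨N, hN⟩ := Filter.eventually_atTop.1 hc
    exact unbounded pu N (hsub N).1
      (growth_fwd pu Q hpurec N (fun n hn => hN n hn))
      (fun n => (hsub n).2.2.1.trans (Ieps_le_one hε (hQ n)))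
  -- part 4 : ps, atBot (growth of ps going to -∞)
  have part4 : ∃ᶠ n : ℤ in Filter.atBot, ps n = Q n := by
    by_contra hc
    rw [Filter.not_frequently] at hc
    obtain ⟨N, hN⟩ := Filter.eventually_atBot.1 hc
    have hgrow := growth_fwd (fun n => ps (-n)) (fun n => Q (-n))
      (fun k => hpsrec k) (-N) (fun n hn => hN (-n) (by omega))
    exact unbounded (fun n => ps (-n)) (-N) (by simpa using (hsub N).2.1)
      hgrow (fun n => ((hsub (-n)).2.2.2.1).trans (Ieps_le_one hε (hQ (-n))))
  -- part 2 : pu, atBot (decay of pu backwards ⇒ limsup at -∞ is 0)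
  have part2 : ∃ᶠ n : ℤ in Filter.atBot, pu n = Q n := by
    by_contra hc
    rw [Filter.not_frequently] at hc
    obtain ⟨N, hN⟩ := Filter.eventually_atBot.1 hc
    have hdec := decay_bwd pu Q hpurec N (fun n hn => hN n hn)
    have hub : ∀ n : ℤ, n ≤ N → pu n = Real.exp (ε * ((n : ℝ) - N)) * pu N := by
      intro n hn
      have hm : ((N - n).toNat : ℤ) = N - n := Int.toNat_of_nonneg (by omega)
      have := hdec (N - n).toNat
      rw [show N - ((N - n).toNat : ℤ) = n by omega] at this
      rw [this]
      congr 1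
      congr 1
      have : (((N - n).toNat : ℤ) : ℝ) = (N : ℝ) - n := by exact_mod_cast congrArg Int.cast hm
      push_cast at this ⊢
      rw [this]; ring
    have htend : Filter.Tendsto (fun n : ℤ => min (pu n) (ps n)) Filter.atBot (nhds 0) := by
      apply tendsto_of_tendsto_of_tendsto_of_le_of_le' tendsto_const_nhds (expdecay N (pu N))
      · exact Filter.Eventually.of_forall fun n => le_min (hsub n).1.le (hsub n).2.1.le
      · filter_upwards [Filter.eventually_le_atBot N] with n hn
        calc min (pu n) (ps n) ≤ pu n := min_le_left _ _
        _ = _ := hub n hn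
    rw [htend.limsup_eq] at hbot
    exact lt_irrefl _ hbot
  -- part 3 : ps, atTop (decay of ps forwards ⇒ limsup at +∞ is 0)
  have part3 : ∃ᶠ n : ℤ in Filter.atTop, ps n = Q n := by
    by_contra hc
    rw [Filter.not_frequently] at hc
    obtain ⟨N, hN⟩ := Filter.eventually_atTop.1 hc
    have hdec := decay_bwd (fun n => ps (-n)) (fun n => Q (-n))
      (fun k => hpsrec k) (-N) (fun n hn => hN (-n) (by omega))
    have hub : ∀ n : ℤ, N ≤ n → ps n = Real.exp (ε * ((N : ℝ) - n)) * ps N := by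
      intro n hn
      have hm : ((n - N).toNat : ℤ) = n - N := Int.toNat_of_nonneg (by omega)
      have := hdec (n - N).toNat
      rw [show -N - ((n - N).toNat : ℤ) = -n by omega] at this
      simp only [neg_neg] at this
      rw [this]
      congr 1
      congr 1
      have : (((n - N).toNat : ℤ) : ℝ) = (n : ℝ) - N := by exact_mod_cast congrArg Int.cast hm
      push_cast at this ⊢
      rw [this]; ring
    have htend : Filter.Tendsto (fun n : ℤ => min (pu n) (ps n)) Filter.atTop (nhds 0) := by
      have hexptend : Filter.Tendsto (fun n : ℤ => Real.exp (ε * ((N : ℝ) - n)) * ps N)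
          Filter.atTop (nhds 0) := by
        have h1 : Filter.Tendsto (fun n : ℤ => ε * ((N : ℝ) - n)) Filter.atTop Filter.atBot := by
          apply Filter.Tendsto.const_mul_atBot hε
          have hcast : Filter.Tendsto (fun n : ℤ => (n : ℝ)) Filter.atTop Filter.atTop :=
            tendsto_intCast_atTop_atTop
          have hneg := Filter.tendsto_neg_atTop_atBot.comp hcast
          simpa [sub_eq_add_neg, Function.comp] using
            Filter.tendsto_atBot_add_const_left _ ((N : ℝ)) hneg
        have h2 := (Real.tendsto_exp_atBot.comp h1).mul_const (ps N)
        simpa using h2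
      apply tendsto_of_tendsto_of_tendsto_of_le_of_le' tendsto_const_nhds hexptend
      · exact Filter.Eventually.of_forall fun n => le_min (hsub n).1.le (hsub n).2.1.le
      · filter_upwards [Filter.eventually_ge_atTop N] with n hn
        calc min (pu n) (ps n) ≤ ps n := min_le_right _ _
        _ = _ := hub n hn
    rw [htend.limsup_eq] at htop
    exact lt_irrefl _ htop
  exact ⟨⟨part1, part2⟩, ⟨part3, part4⟩⟩
end

section
/- Suppose p^u, p^s, q^u, q^s, Q_x, Q_y > 0 satisfy: p^u ≤ Q_x, p^s = min(e^ε q^s, Q_x), q^s ≤ Q_y, and q^u = min(e^ε p^u, Q_y), for some ε > 0. Then e^{-ε} ≤ min(q^u, q^s)/min(p^u, p^s) ≤ e^{ε}. -/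
/-- If `p^u ≤ Q_x`, `p^s = min (e^ε q^s) Q_x`, `q^s ≤ Q_y` and `q^u = min (e^ε p^u) Q_y`
(all quantities positive, `ε > 0`), then
`e^{-ε} ≤ min(q^u, q^s) / min(p^u, p^s) ≤ e^ε`. -/
theorem min_window_ratio_bound (ε pu ps qu qs Qx Qy : ℝ) (hε : 0 < ε)
    (hpu : 0 < pu) (hps : 0 < ps) (hqu : 0 < qu) (hqs : 0 < qs)
    (hQx : 0 < Qx) (hQy : 0 < Qy)
    (h1 : pu ≤ Qx) (h2 : ps = min (Real.exp ε * qs) Qx)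
    (h3 : qs ≤ Qy) (h4 : qu = min (Real.exp ε * pu) Qy) :
    Real.exp (-ε) ≤ min qu qs / min pu ps ∧ min qu qs / min pu ps ≤ Real.exp ε := by
  have he1 : (1 : ℝ) ≤ Real.exp ε := Real.one_le_exp hε.le
  have hepos : (0 : ℝ) < Real.exp ε := Real.exp_pos ε
  have hB : 0 < min pu ps := lt_min hpu hps
  have hA : 0 < min qu qs := lt_min hqu hqs
  -- upper bound: min qu qs ≤ exp ε * min pu ps
  have hub : min qu qs ≤ Real.exp ε * min pu ps := by
    rcases le_total pu ps with h | h
    · rw [min_eq_left h]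
      calc min qu qs ≤ qu := min_le_left _ _
        _ ≤ Real.exp ε * pu := h4 ▸ min_le_left _ _
    · rw [min_eq_right h]
      rcases min_cases (Real.exp ε * qs) Qx with ⟨heq, _⟩ | ⟨heq, hlt⟩
      · calc min qu qs ≤ qs := min_le_right _ _
          _ ≤ Real.exp ε * (Real.exp ε * qs) := by nlinarith
          _ = Real.exp ε * ps := by rw [h2, heq]
      · calc min qu qs ≤ qu := min_le_left _ _
          _ ≤ Real.exp ε * pu := h4 ▸ min_le_left _ _
          _ ≤ Real.exp ε * Qx := by nlinarith
          _ = Real.exp ε * ps := by rw [h2, heq]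
  -- lower bound: min pu ps ≤ exp ε * min qu qs
  have hlb : min pu ps ≤ Real.exp ε * min qu qs := by
    rcases le_total qu qs with h | h
    · rw [min_eq_left h]
      rcases min_cases (Real.exp ε * pu) Qy with ⟨heq, _⟩ | ⟨heq, hlt⟩
      · calc min pu ps ≤ pu := min_le_left _ _
          _ ≤ Real.exp ε * (Real.exp ε * pu) := by nlinarith
          _ = Real.exp ε * qu := by rw [h4, heq]
      · calc min pu ps ≤ ps := min_le_right _ _
          _ ≤ Real.exp ε * qs := h2 ▸ min_le_left _ _
          _ ≤ Real.exp ε * Qy := by nlinarith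
          _ = Real.exp ε * qu := by rw [h4, heq]
    · rw [min_eq_right h]
      calc min pu ps ≤ ps := min_le_right _ _
        _ ≤ Real.exp ε * qs := h2 ▸ min_le_left _ _
  constructor
  · rw [le_div_iff₀ hB]
    have hinv : Real.exp (-ε) * Real.exp ε = 1 := by rw [← Real.exp_add]; simp
    nlinarith [Real.exp_pos (-ε)]
  · rw [div_le_iff₀ hB]
    exact hub
end

section
/- Let η > 0 and 0 < ε < 1/2. Suppose F, G : [−η, η] → ℝ satisfy |F(0)|, |G(0)| ≤ 10⁻³η and Lip(F), Lip(G) ≤ ε. Then F and G map [−10⁻²η, 10⁻²η] into itself, the composition G∘F has a unique fixed point w in [−10⁻²η, 10⁻²η], and setting v := F(w), the point (v, w) satisfies v = F(w), w = G(v), and |v|, |w| ≤ 10⁻²η. Moreover (v, w) is the unique point with v = F(w) and w = G(v) in [−η, η]². -/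
/-! Both graphs are `ε`-Lipschitz with `ε < 1/2` and pass within `η/1000` of the origin, so each
maps `[-η/100, η/100]` into itself; the intermediate value theorem then gives a fixed point of
`G ∘ F` there. Wherever `F` takes values in `[-η, η]`, the composite `G ∘ F` is
`ε²`-Lipschitz with `ε² < 1`, so it has at most one fixed point there. -/

open Set Metric NNReal Function

theorem LipschitzOnWith.mapsTo_closedBall_zero {E : Type*} [SeminormedAddCommGroup E]
    {f : E → E} {K : ℝ≥0} {r : ℝ} (hf : LipschitzOnWith K f (closedBall 0 r))
    (h0 : ‖f 0‖ ≤ (1 - K) * r) : MapsTo f (closedBall 0 r) (closedBall 0 r) := by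
  intro x hx
  rw [mem_closedBall_zero_iff] at hx ⊢
  have hdist := hf.dist_le_mul x (mem_closedBall_zero_iff.2 hx) 0
    (mem_closedBall_self ((norm_nonneg x).trans hx))
  rw [dist_eq_norm, dist_zero_right] at hdist
  calc ‖f x‖ ≤ ‖f x - f 0‖ + ‖f 0‖ := norm_le_norm_sub_add _ _
    _ ≤ K * r + (1 - K) * r := add_le_add (hdist.trans (by gcongr)) h0
    _ = r := by ring

theorem LipschitzOnWith.isFixedPt_unique {α : Type*} [MetricSpace α] {f : α → α} {K : ℝ≥0}
    {s : Set α} (hf : LipschitzOnWith K f s) (hK : K < 1) {x y : α} (hx : x ∈ s) (hy : y ∈ s)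
    (hfx : IsFixedPt f x) (hfy : IsFixedPt f y) : x = y := by
  have hxy : dist x y ≤ K * dist x y := by
    simpa only [hfx.eq, hfy.eq] using hf.dist_le_mul x hx y hy
  have hK' : (K : ℝ) < 1 := hK
  exact dist_le_zero.1 (by nlinarith [dist_nonneg (x := x) (y := y)])

theorem lipschitzOnWith_of_abs_sub_le {f : ℝ → ℝ} {s : Set ℝ} {ε : ℝ} (hε : 0 ≤ ε)
    (h : ∀ x ∈ s, ∀ y ∈ s, |f x - f y| ≤ ε * |x - y|) :
    LipschitzOnWith ε.toNNReal f s :=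
  lipschitzOnWith_iff_dist_le_mul.2 fun x hx y hy => by
    simpa only [Real.dist_eq, Real.coe_toNNReal _ hε] using h x hx y hy

/-- Intersection of admissible graphs: if `|F(0)|, |G(0)| ≤ 10⁻³η` and `F, G` are
ε-Lipschitz on `[-η, η]` with `0 < ε < 1/2`, then `F` and `G` map
`[-10⁻²η, 10⁻²η]` into itself, `G ∘ F` has a unique fixed point `w` there, and with
`v := F w` one has `v = F w`, `w = G v`, `|v|, |w| ≤ 10⁻²η`; moreover `(v, w)` is the
unique solution of `v = F w`, `w = G v` in `[-η, η]²`. -/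
theorem admissible_graphs_intersect (η ε : ℝ) (hη : 0 < η) (hε0 : 0 < ε) (hε : ε < 1 / 2)
    (F G : ℝ → ℝ)
    (hF0 : |F 0| ≤ η / 1000) (hG0 : |G 0| ≤ η / 1000)
    (hFlip : ∀ x ∈ Set.Icc (-η) η, ∀ y ∈ Set.Icc (-η) η, |F x - F y| ≤ ε * |x - y|)
    (hGlip : ∀ x ∈ Set.Icc (-η) η, ∀ y ∈ Set.Icc (-η) η, |G x - G y| ≤ ε * |x - y|) :
    (Set.MapsTo F (Set.Icc (-(η / 100)) (η / 100)) (Set.Icc (-(η / 100)) (η / 100))) ∧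
    (Set.MapsTo G (Set.Icc (-(η / 100)) (η / 100)) (Set.Icc (-(η / 100)) (η / 100))) ∧
    ∃ w v : ℝ, w ∈ Set.Icc (-(η / 100)) (η / 100) ∧ G (F w) = w ∧
      (∀ w' ∈ Set.Icc (-(η / 100)) (η / 100), G (F w') = w' → w' = w) ∧
      v = F w ∧ w = G v ∧ |v| ≤ η / 100 ∧ |w| ≤ η / 100 ∧
      (∀ v' ∈ Set.Icc (-η) η, ∀ w' ∈ Set.Icc (-η) η,
        v' = F w' → w' = G v' → v' = v ∧ w' = w) := by
  set I := Icc (-(η / 100)) (η / 100)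
  set J := Icc (-η) η
  have hIJ : I ⊆ J := Icc_subset_Icc (by linarith) (by linarith)
  have hF := lipschitzOnWith_of_abs_sub_le hε0.le hFlip
  have hG := lipschitzOnWith_of_abs_sub_le hε0.le hGlip
  have mapsTo_I : ∀ H : ℝ → ℝ, LipschitzOnWith ε.toNNReal H J → |H 0| ≤ η / 1000 →
      MapsTo H I I := fun H hH hH0 => by
    simp only [I, ← Real.closedBall_zero_eq_Icc] at hIJ ⊢
    refine (hH.mono hIJ).mapsTo_closedBall_zero ?_
    rw [Real.norm_eq_abs, Real.coe_toNNReal _ hε0.le]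
    nlinarith
  have hFI := mapsTo_I F hF hF0
  have hGI := mapsTo_I G hG hG0
  have hGF : LipschitzOnWith (ε.toNNReal * ε.toNNReal) (G ∘ F) (J ∩ F ⁻¹' J) :=
    hG.comp (hF.mono inter_subset_left) fun _ hx => hx.2
  have hεε : ε.toNNReal * ε.toNNReal < 1 :=
    have hε1 : ε.toNNReal < 1 := Real.toNNReal_lt_one.2 (by linarith)
    mul_lt_one_of_nonneg_of_lt_one_left zero_le hε1 hε1.le
  have hIsub : I ⊆ J ∩ F ⁻¹' J := fun x hx => ⟨hIJ hx, hIJ (hFI hx)⟩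
  obtain ⟨w, hw, hfix⟩ := exists_mem_Icc_isFixedPt_of_mapsTo
    (hGF.mono hIsub).continuousOn (by linarith) (hGI.comp hFI)
  have unique : ∀ w', w' ∈ J ∩ F ⁻¹' J → G (F w') = w' → w' = w := fun w' hw' hfix' =>
    hGF.isFixedPt_unique hεε hw' (hIsub hw) hfix' hfix
  refine ⟨hFI, hGI, w, F w, hw, hfix, fun w' hw' hfix' => unique w' (hIsub hw') hfix',
    rfl, hfix.symm, abs_le.2 (hFI hw), abs_le.2 hw, ?_⟩
  rintro v' hv' w' hw' rfl hw'_eq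
  obtain rfl := unique w' ⟨hw', hv'⟩ hw'_eq.symm
  exact ⟨rfl, rfl⟩
end

section
/- Let 0 < ε < 1/2 and η > 0. For i = 1, 2, let F_i, G_i : [−10⁻²η, 10⁻²η] → [−10⁻²η, 10⁻²η] be ε-Lipschitz maps, and let (v_i, w_i) be the unique solutions of v_i = F_i(w_i), w_i = G_i(v_i). Then |w₁ − w₂| ≤ (1 − ε²)⁻¹ ‖G₁∘F₁ − G₂∘F₂‖_∞ and |v₁ − v₂| ≤ (1 − ε²)⁻¹ ‖F₁∘G₁ − F₂∘G₂‖_∞; consequently ‖(v₁,w₁) − (v₂,w₂)‖ ≤ (2(1+ε)/(1−ε²)) (‖F₁−F₂‖_∞ + ‖G₁−G₂‖_∞) in the ℓ¹ sense on each coordinate. -/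
/-- Lipschitz dependence of the intersection point on the representing functions:
if `F_i, G_i : [-10⁻²η, 10⁻²η] → [-10⁻²η, 10⁻²η]` are ε-Lipschitz (`0 < ε < 1/2`) and
`(v_i, w_i)` solve `v_i = F_i w_i`, `w_i = G_i v_i`, then
`|w₁ - w₂| ≤ (1-ε²)⁻¹ ‖G₁∘F₁ - G₂∘F₂‖_∞`, `|v₁ - v₂| ≤ (1-ε²)⁻¹ ‖F₁∘G₁ - F₂∘G₂‖_∞`,
and `|v₁-v₂| + |w₁-w₂| ≤ (2(1+ε)/(1-ε²)) (‖F₁-F₂‖_∞ + ‖G₁-G₂‖_∞)`. -/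
theorem intersection_point_lipschitz (ε η : ℝ) (hε0 : 0 < ε) (hε : ε < 1 / 2) (hη : 0 < η)
    (F₁ F₂ G₁ G₂ : ℝ → ℝ)
    (hF₁ : Set.MapsTo F₁ (Set.Icc (-(η / 100)) (η / 100)) (Set.Icc (-(η / 100)) (η / 100)))
    (hF₂ : Set.MapsTo F₂ (Set.Icc (-(η / 100)) (η / 100)) (Set.Icc (-(η / 100)) (η / 100)))
    (hG₁ : Set.MapsTo G₁ (Set.Icc (-(η / 100)) (η / 100)) (Set.Icc (-(η / 100)) (η / 100)))
    (hG₂ : Set.MapsTo G₂ (Set.Icc (-(η / 100)) (η / 100)) (Set.Icc (-(η / 100)) (η / 100)))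
    (hF₁lip : ∀ x ∈ Set.Icc (-(η / 100)) (η / 100), ∀ y ∈ Set.Icc (-(η / 100)) (η / 100),
      |F₁ x - F₁ y| ≤ ε * |x - y|)
    (hF₂lip : ∀ x ∈ Set.Icc (-(η / 100)) (η / 100), ∀ y ∈ Set.Icc (-(η / 100)) (η / 100),
      |F₂ x - F₂ y| ≤ ε * |x - y|)
    (hG₁lip : ∀ x ∈ Set.Icc (-(η / 100)) (η / 100), ∀ y ∈ Set.Icc (-(η / 100)) (η / 100),
      |G₁ x - G₁ y| ≤ ε * |x - y|)
    (hG₂lip : ∀ x ∈ Set.Icc (-(η / 100)) (η / 100), ∀ y ∈ Set.Icc (-(η / 100)) (η / 100),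
      |G₂ x - G₂ y| ≤ ε * |x - y|)
    (v₁ w₁ v₂ w₂ : ℝ)
    (hv₁ : v₁ ∈ Set.Icc (-(η / 100)) (η / 100)) (hw₁ : w₁ ∈ Set.Icc (-(η / 100)) (η / 100))
    (hv₂ : v₂ ∈ Set.Icc (-(η / 100)) (η / 100)) (hw₂ : w₂ ∈ Set.Icc (-(η / 100)) (η / 100))
    (h1 : v₁ = F₁ w₁ ∧ w₁ = G₁ v₁) (h2 : v₂ = F₂ w₂ ∧ w₂ = G₂ v₂) :
    |w₁ - w₂| ≤ (1 - ε ^ 2)⁻¹ *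
        ⨆ t : Set.Icc (-(η / 100)) (η / 100), |G₁ (F₁ t) - G₂ (F₂ t)| ∧
    |v₁ - v₂| ≤ (1 - ε ^ 2)⁻¹ *
        ⨆ t : Set.Icc (-(η / 100)) (η / 100), |F₁ (G₁ t) - F₂ (G₂ t)| ∧
    |v₁ - v₂| + |w₁ - w₂| ≤ (2 * (1 + ε) / (1 - ε ^ 2)) *
        ((⨆ t : Set.Icc (-(η / 100)) (η / 100), |F₁ t - F₂ t|) +
          (⨆ t : Set.Icc (-(η / 100)) (η / 100), |G₁ t - G₂ t|)) := by

  obtain ⟨hv1, hw1⟩ := h1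
  obtain ⟨hv2, hw2⟩ := h2
  set I := Set.Icc (-(η / 100)) (η / 100) with hIdef
  have hI0 : (0:ℝ) ∈ I := ⟨by linarith, by linarith⟩
  have hne : Nonempty I := ⟨⟨0, hI0⟩⟩
  have hbdd : ∀ f g : ℝ → ℝ, Set.MapsTo f I I → Set.MapsTo g I I →
      BddAbove (Set.range fun t : I => |f t - g t|) := by
    intro f g hf hg
    refine ⟨η/50, ?_⟩
    rintro x ⟨t, rfl⟩
    obtain ⟨ha, hb⟩ := hf t.2
    obtain ⟨hc, hd⟩ := hg t.2
    rw [abs_sub_le_iff]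
    constructor <;> linarith
  have h1e : (0:ℝ) < 1 - ε ^ 2 := by nlinarith
  -- composite maps
  have hGF₁ : Set.MapsTo (fun t => G₁ (F₁ t)) I I := fun t ht => hG₁ (hF₁ ht)
  have hGF₂ : Set.MapsTo (fun t => G₂ (F₂ t)) I I := fun t ht => hG₂ (hF₂ ht)
  have hFG₁ : Set.MapsTo (fun t => F₁ (G₁ t)) I I := fun t ht => hF₁ (hG₁ ht)
  have hFG₂ : Set.MapsTo (fun t => F₂ (G₂ t)) I I := fun t ht => hF₂ (hG₂ ht)
  have bGF := hbdd _ _ hGF₁ hGF₂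
  have bFG := hbdd _ _ hFG₁ hFG₂
  have bF := hbdd _ _ hF₁ hF₂
  have bG := hbdd _ _ hG₁ hG₂
  set SGF := ⨆ t : I, |G₁ (F₁ t) - G₂ (F₂ t)| with hSGF
  set SFG := ⨆ t : I, |F₁ (G₁ t) - F₂ (G₂ t)| with hSFG
  set SF := ⨆ t : I, |F₁ t - F₂ t| with hSF
  set SG := ⨆ t : I, |G₁ t - G₂ t| with hSG
  have hw : |w₁ - w₂| ≤ (1 - ε ^ 2)⁻¹ * SGF := by
    have k1 : |G₁ (F₁ w₁) - G₁ (F₁ w₂)| ≤ ε * |F₁ w₁ - F₁ w₂| :=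
      hG₁lip _ (hF₁ hw₁) _ (hF₁ hw₂)
    have k2 : |F₁ w₁ - F₁ w₂| ≤ ε * |w₁ - w₂| := hF₁lip _ hw₁ _ hw₂
    have k3 : |G₁ (F₁ w₂) - G₂ (F₂ w₂)| ≤ SGF :=
      le_ciSup bGF (⟨w₂, hw₂⟩ : I)
    have k4 : |w₁ - w₂| ≤ |G₁ (F₁ w₁) - G₁ (F₁ w₂)| + |G₁ (F₁ w₂) - G₂ (F₂ w₂)| := by
      have e1 : w₁ = G₁ (F₁ w₁) := by rw [← hv1, ← hw1]
      have e2 : w₂ = G₂ (F₂ w₂) := by rw [← hv2, ← hw2]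
      calc |w₁ - w₂| = |G₁ (F₁ w₁) - G₂ (F₂ w₂)| := by rw [← e1, ← e2]
        _ ≤ _ := abs_sub_le _ _ _
    rw [inv_mul_eq_div, le_div_iff₀ h1e]
    nlinarith [abs_nonneg (w₁ - w₂)]
  have hv : |v₁ - v₂| ≤ (1 - ε ^ 2)⁻¹ * SFG := by
    have k1 : |F₁ (G₁ v₁) - F₁ (G₁ v₂)| ≤ ε * |G₁ v₁ - G₁ v₂| :=
      hF₁lip _ (hG₁ hv₁) _ (hG₁ hv₂)
    have k2 : |G₁ v₁ - G₁ v₂| ≤ ε * |v₁ - v₂| := hG₁lip _ hv₁ _ hv₂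
    have k3 : |F₁ (G₁ v₂) - F₂ (G₂ v₂)| ≤ SFG :=
      le_ciSup bFG (⟨v₂, hv₂⟩ : I)
    have k4 : |v₁ - v₂| ≤ |F₁ (G₁ v₁) - F₁ (G₁ v₂)| + |F₁ (G₁ v₂) - F₂ (G₂ v₂)| := by
      have e1 : v₁ = F₁ (G₁ v₁) := by rw [← hw1, ← hv1]
      have e2 : v₂ = F₂ (G₂ v₂) := by rw [← hw2, ← hv2]
      calc |v₁ - v₂| = |F₁ (G₁ v₁) - F₂ (G₂ v₂)| := by rw [← e1, ← e2]
        _ ≤ _ := abs_sub_le _ _ _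
    rw [inv_mul_eq_div, le_div_iff₀ h1e]
    nlinarith [abs_nonneg (v₁ - v₂)]
  refine ⟨hw, hv, ?_⟩
  have hSFnn : 0 ≤ SF := le_trans (abs_nonneg _) (le_ciSup bF (⟨0, hI0⟩ : I))
  have hSGnn : 0 ≤ SG := le_trans (abs_nonneg _) (le_ciSup bG (⟨0, hI0⟩ : I))
  have hGFle : SGF ≤ ε * SF + SG := by
    refine ciSup_le fun t => ?_
    have k1 : |G₁ (F₁ t) - G₁ (F₂ t)| ≤ ε * |F₁ t - F₂ t| :=
      hG₁lip _ (hF₁ t.2) _ (hF₂ t.2)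
    have k2 : |F₁ t - F₂ t| ≤ SF := le_ciSup bF t
    have k3 : |G₁ (F₂ t) - G₂ (F₂ t)| ≤ SG := by
      have := le_ciSup bG (⟨F₂ t, hF₂ t.2⟩ : I)
      exact this
    calc |G₁ (F₁ t) - G₂ (F₂ t)| ≤ |G₁ (F₁ t) - G₁ (F₂ t)| + |G₁ (F₂ t) - G₂ (F₂ t)| :=
          abs_sub_le _ _ _
      _ ≤ ε * SF + SG := by nlinarith
  have hFGle : SFG ≤ ε * SG + SF := by
    refine ciSup_le fun t => ?_
    have k1 : |F₁ (G₁ t) - F₁ (G₂ t)| ≤ ε * |G₁ t - G₂ t| :=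
      hF₁lip _ (hG₁ t.2) _ (hG₂ t.2)
    have k2 : |G₁ t - G₂ t| ≤ SG := le_ciSup bG t
    have k3 : |F₁ (G₂ t) - F₂ (G₂ t)| ≤ SF := by
      have := le_ciSup bF (⟨G₂ t, hG₂ t.2⟩ : I)
      exact this
    calc |F₁ (G₁ t) - F₂ (G₂ t)| ≤ |F₁ (G₁ t) - F₁ (G₂ t)| + |F₁ (G₂ t) - F₂ (G₂ t)| :=
          abs_sub_le _ _ _
      _ ≤ ε * SG + SF := by nlinarith
  have hd : (0:ℝ) < (1 - ε ^ 2)⁻¹ := inv_pos.mpr h1e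
  rw [div_eq_mul_inv]
  nlinarith [mul_le_mul_of_nonneg_left hGFle hd.le, mul_le_mul_of_nonneg_left hFGle hd.le,
    mul_nonneg hd.le hSFnn, mul_nonneg hd.le hSGnn,
    mul_nonneg hε0.le (mul_nonneg hd.le hSFnn), mul_nonneg hε0.le (mul_nonneg hd.le hSGnn)]
end
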